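/- Under the same hypotheses (X_n ≥ 0 converging in distribution to X with 0 < E[X²] < ∞, E[X³] = ∞, E[X_n²] → E[X²]; m_n ↑ ∞; X_{n,1},…,X_{n,m_n} i.i.d. copies of X_n; S_n = Σ_j X_{n,j}³), one has m_n^{−1}·Σ_{{j,k}⊂[m_n]} X_{n,j}² X_{n,k}² = o_P(S_n). -/

import Mathlib

open MeasureTheory ProbabilityTheory Filter Finset
open scoped Topology BoundedContinuousFunction ENNReal

/-!
If `Σ_j Y_j² < c m`, the pair sum is at most `(Σ_j Y_j²)² < c² m²`, so the event
`ε S < m⁻¹ Σ_{k<j} Y_j² Y_k²` forces `S < (c²/ε) m`. By Markov's inequality the first condition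
fails with probability at most `E[X_n²]/c`, small for large `c`. The second event has vanishing
probability for every fixed constant `C` because `E[X³] = ∞`: choose `k` with
`E[min(X³, k)] > C + 1`; by weak convergence the truncated means of the `X_n³` eventually exceed
`C + 1`, and Chebyshev's inequality for the bounded, pairwise independent truncated summands gives
`P(S_n < C m_n) ≤ k² / (4 m_n)`.
-/

lemma tendsto_nhds_zero_of_forall_eventually_le_ofReal {α : Type*} {l : Filter α} {u : α → ℝ≥0∞}
    (h : ∀ r : ℝ, 0 < r → ∀ᶠ x in l, u x ≤ ENNReal.ofReal r) : Tendsto u l (𝓝 0) := by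
  refine ENNReal.tendsto_nhds_zero.2 fun δ hδ => ?_
  obtain ⟨r, -, hr, hrδ⟩ := ENNReal.lt_iff_exists_real_btwn.1 hδ
  exact (h r (ENNReal.ofReal_pos.1 hr)).mono fun x hx => hx.trans hrδ.le

lemma sum_range_sum_range_mul_le_sq {a : ℕ → ℝ} (ha : ∀ j, 0 ≤ a j) (M : ℕ) :
    ∑ j ∈ range M, ∑ k ∈ range j, a j * a k ≤ (∑ j ∈ range M, a j) ^ 2 := by
  rw [sq, sum_mul_sum]
  exact sum_le_sum fun j hj => sum_le_sum_of_subset_of_nonneg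
    (range_subset_range.2 (mem_range.1 hj).le) fun k _ _ => mul_nonneg (ha j) (ha k)

lemma mul_le_sum_sq_or_sum_cube_lt {y : ℕ → ℝ} {M : ℕ} {ε : ℝ} (hε : 0 < ε) (c : ℝ)
    (h : ε * ∑ j ∈ range M, y j ^ 3 < (∑ j ∈ range M, ∑ k ∈ range j, y j ^ 2 * y k ^ 2) / M) :
    c * M ≤ ∑ j ∈ range M, y j ^ 2 ∨ ∑ j ∈ range M, y j ^ 3 < c ^ 2 / ε * M := by
  rcases M.eq_zero_or_pos with rfl | hM
  · simp at h
  by_contra! hc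
  obtain ⟨hs2, hs3⟩ := hc
  have hMpos : (0 : ℝ) < M := Nat.cast_pos.2 hM
  have hs2nn : 0 ≤ ∑ j ∈ range M, y j ^ 2 := sum_nonneg fun j _ => sq_nonneg _
  have hpairs : (∑ j ∈ range M, ∑ k ∈ range j, y j ^ 2 * y k ^ 2) / M ≤ c ^ 2 * M := by
    rw [div_le_iff₀ hMpos]
    calc _ ≤ (∑ j ∈ range M, y j ^ 2) ^ 2 :=
          sum_range_sum_range_mul_le_sq (fun j => sq_nonneg (y j)) M
      _ ≤ (c * M) ^ 2 := pow_le_pow_left₀ hs2nn hs2.le 2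
      _ = c ^ 2 * M * M := by ring
  rw [div_mul_eq_mul_div, div_le_iff₀ hε] at hs3
  linarith

section Probability

variable {Ω : Type*} [MeasurableSpace Ω] {μ : Measure Ω}

lemma identDistrib_of_map_eq {γ : Type*} [MeasurableSpace γ] [NeZero μ] {f g : Ω → γ}
    (hg : AEMeasurable g μ) (h : μ.map f = μ.map g) : IdentDistrib f g μ μ := by
  refine ⟨?_, hg, h⟩
  by_contra hf
  rw [Measure.map_of_not_aemeasurable hf, eq_comm, Measure.map_eq_zero_iff hg] at h
  exact NeZero.ne μ h

lemma measure_mul_le_sum_le [IsFiniteMeasure μ] {Z : ℕ → Ω → ℝ} {X : Ω → ℝ} {M : ℕ}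
    (hM : 0 < M) (hZ : ∀ j < M, IdentDistrib (Z j) X μ μ) (hXnn : 0 ≤ᵐ[μ] X)
    (hX : Integrable X μ) {c : ℝ} (hc : 0 < c) :
    μ {ω | c * M ≤ ∑ j ∈ range M, Z j ω} ≤ ENNReal.ofReal ((∫ ω, X ω ∂μ) / c) := by
  have hint : ∀ j ∈ range M, Integrable (Z j) μ := fun j hj =>
    (hZ j (mem_range.1 hj)).symm.integrable_snd hX
  have hnn : 0 ≤ᵐ[μ] fun ω => ∑ j ∈ range M, Z j ω := by
    have : ∀ j ∈ range M, 0 ≤ᵐ[μ] Z j := fun j hj =>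
      (hZ j (mem_range.1 hj)).symm.ae_snd measurableSet_Ici hXnn
    filter_upwards [(eventually_all_finset _).2 this] with ω hω
    exact sum_nonneg hω
  have hmean : ∫ ω, ∑ j ∈ range M, Z j ω ∂μ = M * ∫ ω, X ω ∂μ := by
    rw [integral_finsetSum _ hint,
      sum_congr rfl fun j hj => (hZ j (mem_range.1 hj)).integral_eq]
    simp
  have hmarkov := mul_meas_ge_le_integral_of_nonneg hnn (integrable_finsetSum _ hint) (c * M)
  rw [hmean] at hmarkov
  have hMpos : (0 : ℝ) < M := Nat.cast_pos.2 hM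
  rw [← ofReal_measureReal]
  refine ENNReal.ofReal_le_ofReal ((le_div_iff₀ hc).2 ?_)
  nlinarith

lemma measure_sum_le_mul_sub_le [IsProbabilityMeasure μ] {ι : Type*} {s : Finset ι}
    (hs : s.Nonempty) {Z : ι → Ω → ℝ}
    (hind : (s : Set ι).Pairwise fun i j => IndepFun (Z i) (Z j) μ)
    (hmeas : ∀ i ∈ s, AEMeasurable (Z i) μ) {b B : ℝ}
    (hbd : ∀ i ∈ s, ∀ᵐ ω ∂μ, Z i ω ∈ Set.Icc b B) {a : ℝ}
    (hmean : ∀ i ∈ s, ∫ ω, Z i ω ∂μ = a) {t : ℝ} (ht : 0 < t) :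
    μ {ω | ∑ i ∈ s, Z i ω ≤ (a - t) * #s} ≤ ENNReal.ofReal (((B - b) / 2) ^ 2 / (t ^ 2 * #s)) := by
  have hcard : (0 : ℝ) < #s := Nat.cast_pos.2 hs.card_pos
  have hL2 : ∀ i ∈ s, MemLp (Z i) 2 μ := fun i hi =>
    memLp_of_bounded (hbd i hi) (hmeas i hi).aestronglyMeasurable 2
  have hmeanSum : ∫ ω, ∑ i ∈ s, Z i ω ∂μ = a * #s := by
    rw [integral_finsetSum _ fun i hi => (hL2 i hi).integrable one_le_two, sum_congr rfl hmean]
    simp [mul_comm]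
  have hvar : Var[fun ω => ∑ i ∈ s, Z i ω; μ] ≤ #s * ((B - b) / 2) ^ 2 := by
    rw [← Finset.sum_fn, IndepFun.variance_sum hL2 hind]
    calc _ ≤ ∑ _i ∈ s, ((B - b) / 2) ^ 2 :=
          sum_le_sum fun i hi => variance_le_sq_of_bounded (hbd i hi) (hmeas i hi)
      _ = _ := by simp
  have hsub : {ω | ∑ i ∈ s, Z i ω ≤ (a - t) * #s}
      ⊆ {ω | t * #s ≤ |∑ i ∈ s, Z i ω - ∫ ω, ∑ i ∈ s, Z i ω ∂μ|} := by
    intro ω hω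
    rw [Set.mem_ofPred] at hω ⊢
    rw [hmeanSum, abs_sub_comm]
    exact le_abs.2 (Or.inl (by linarith))
  calc _ ≤ _ := measure_mono hsub
    _ ≤ ENNReal.ofReal (Var[fun ω => ∑ i ∈ s, Z i ω; μ] / (t * #s) ^ 2) :=
        meas_ge_le_variance_div_sq (memLp_finsetSum s hL2) (mul_pos ht hcard)
    _ ≤ _ := by
        refine ENNReal.ofReal_le_ofReal ?_
        rw [div_le_div_iff₀ (by positivity) (by positivity)]
        calc Var[fun ω => ∑ i ∈ s, Z i ω; μ] * (t ^ 2 * #s)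
            ≤ #s * ((B - b) / 2) ^ 2 * (t ^ 2 * #s) :=
              mul_le_mul_of_nonneg_right hvar (by positivity)
          _ = ((B - b) / 2) ^ 2 * (t * #s) ^ 2 := by ring

noncomputable def truncAt (k : ℕ) : ℝ →ᵇ ℝ :=
  .ofNormedAddCommGroup (fun t => min (max t 0) k) (by fun_prop) k fun t => by
    rw [Real.norm_eq_abs, abs_of_nonneg (le_min (le_max_right t 0) k.cast_nonneg)]
    exact min_le_right _ _

lemma truncAt_apply (k : ℕ) (t : ℝ) : truncAt k t = min (max t 0) k := rfl

lemma truncAt_mem_Icc (k : ℕ) (t : ℝ) : truncAt k t ∈ Set.Icc (0 : ℝ) k :=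
  ⟨le_min (le_max_right t 0) k.cast_nonneg, min_le_right _ _⟩

lemma truncAt_le {t : ℝ} (ht : 0 ≤ t) (k : ℕ) : truncAt k t ≤ t :=
  (min_le_left _ _).trans (max_eq_left ht).le

lemma exists_lt_integral_truncAt [IsFiniteMeasure μ] {f : Ω → ℝ} (hf : Measurable f)
    (htop : ∫⁻ ω, ENNReal.ofReal (f ω) ∂μ = ∞) (b : ℝ) :
    ∃ k : ℕ, b < ∫ ω, truncAt k (f ω) ∂μ := by
  have hlim : Tendsto (fun k : ℕ => ∫⁻ ω, ENNReal.ofReal (truncAt k (f ω)) ∂μ) atTop (𝓝 ∞) := by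
    rw [← htop]
    refine lintegral_tendsto_of_tendsto_of_monotone
      (fun k => ((truncAt k).continuous.measurable.comp hf).ennreal_ofReal.aemeasurable)
      (ae_of_all _ fun ω k l hkl => ENNReal.ofReal_le_ofReal
        (min_le_min_left _ (Nat.cast_le.2 hkl))) (ae_of_all _ fun ω => ?_)
    refine tendsto_const_nhds.congr' ?_
    filter_upwards [eventually_ge_atTop ⌈max (f ω) 0⌉₊] with k hk
    rw [truncAt_apply, min_eq_left (Nat.ceil_le.1 hk), ENNReal.ofReal_max]
    simp
  obtain ⟨k, hk⟩ := (hlim.eventually (eventually_gt_nhds ENNReal.ofReal_lt_top)).exists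
  refine ⟨k, (ENNReal.ofReal_lt_ofReal_iff'.1 ?_).1⟩
  rwa [ofReal_integral_eq_lintegral_ofReal]
  · exact Integrable.of_bound ((truncAt k).continuous.measurable.comp hf).aestronglyMeasurable
      ‖truncAt k‖ (ae_of_all _ fun ω => (truncAt k).norm_coe_le_norm _)
  · exact ae_of_all _ fun ω => (truncAt_mem_Icc k _).1

theorem tendsto_measure_sum_lt_mul_of_lintegral_eq_top [IsProbabilityMeasure μ]
    {X : ℕ → Ω → ℝ} {Xlim : Ω → ℝ} (hXnonneg : ∀ n, 0 ≤ᵐ[μ] X n) (hXlim : Measurable Xlim)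
    (hconv : ∀ f : ℝ →ᵇ ℝ,
      Tendsto (fun n => ∫ ω, f (X n ω) ∂μ) atTop (𝓝 (∫ ω, f (Xlim ω) ∂μ)))
    (htop : ∫⁻ ω, ENNReal.ofReal (Xlim ω) ∂μ = ∞)
    {m : ℕ → ℕ} (hm : Tendsto m atTop atTop) {Y : ℕ → ℕ → Ω → ℝ}
    (hYindep : ∀ n, (range (m n) : Set ℕ).Pairwise fun i j => IndepFun (Y n i) (Y n j) μ)
    (hY : ∀ n, ∀ i < m n, IdentDistrib (Y n i) (X n) μ μ) (C : ℝ) :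
    Tendsto (fun n => μ {ω | ∑ j ∈ range (m n), Y n j ω < C * m n}) atTop (𝓝 0) := by
  obtain ⟨k, hk⟩ := exists_lt_integral_truncAt hXlim htop (C + 1)
  have hbound : ∀ᶠ n in atTop, μ {ω | ∑ j ∈ range (m n), Y n j ω < C * m n}
      ≤ ENNReal.ofReal (k ^ 2 / 4 / m n) := by
    filter_upwards [(hconv (truncAt k)).eventually (eventually_gt_nhds hk),
      hm.eventually_gt_atTop 0] with n hn hmn
    have hYk : ∀ j < m n,
        IdentDistrib (fun ω => truncAt k (Y n j ω)) (fun ω => truncAt k (X n ω)) μ μ :=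
      fun j hj => (hY n j hj).comp (truncAt k).continuous.measurable
    have hYnn : ∀ᵐ ω ∂μ, ∀ j ∈ range (m n), 0 ≤ Y n j ω :=
      (eventually_all_finset _).2 fun j hj =>
        (hY n j (mem_range.1 hj)).symm.ae_snd measurableSet_Ici (hXnonneg n)
    calc _ ≤ μ {ω | ∑ j ∈ range (m n), truncAt k (Y n j ω)
          ≤ ((∫ ω, truncAt k (X n ω) ∂μ) - 1) * #(range (m n))} := by
          refine measure_mono_ae ?_
          filter_upwards [hYnn] with ω hω hlt
          rw [card_range]
          have htrunc : ∑ j ∈ range (m n), truncAt k (Y n j ω) ≤ ∑ j ∈ range (m n), Y n j ω :=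
            sum_le_sum fun j hj => truncAt_le (hω j hj) k
          have hC : C * m n ≤ ((∫ ω, truncAt k (X n ω) ∂μ) - 1) * m n := by gcongr; linarith
          exact (htrunc.trans hlt.le).trans hC
      _ ≤ _ := measure_sum_le_mul_sub_le (nonempty_range_iff.2 hmn.ne')
          (fun i hi j hj hij => (hYindep n hi hj hij).comp (truncAt k).continuous.measurable
            (truncAt k).continuous.measurable)
          (fun j hj => (hYk j (mem_range.1 hj)).aemeasurable_fst)
          (fun j _ => ae_of_all _ fun ω => truncAt_mem_Icc k _)
          (fun j hj => (hYk j (mem_range.1 hj)).integral_eq) one_pos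
      _ = _ := by rw [card_range]; ring_nf
  refine tendsto_of_tendsto_of_tendsto_of_le_of_le' tendsto_const_nhds ?_
    (Eventually.of_forall fun n => zero_le) hbound
  simpa [Function.comp_def] using (ENNReal.continuous_ofReal.tendsto 0).comp
    (tendsto_const_nhds.div_atTop (tendsto_natCast_atTop_atTop.comp hm))

end Probability

theorem stmt11_general {Ω : Type*} [MeasurableSpace Ω] (μ : Measure Ω) [IsProbabilityMeasure μ]
    (X : ℕ → Ω → ℝ) (Xlim : Ω → ℝ)
    (hXmeas : ∀ n, Measurable (X n)) (hXlimMeas : Measurable Xlim)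
    (hXnonneg : ∀ n ω, 0 ≤ X n ω)
    (hconv : ∀ f : ℝ →ᵇ ℝ,
      Tendsto (fun n => ∫ ω, f (X n ω) ∂μ) atTop (𝓝 (∫ ω, f (Xlim ω) ∂μ)))
    (h3inf : ∫⁻ ω, ENNReal.ofReal (Xlim ω ^ 3) ∂μ = ⊤)
    (hn2int : ∀ n, Integrable (fun ω => X n ω ^ 2) μ)
    (h2conv : Tendsto (fun n => ∫ ω, X n ω ^ 2 ∂μ) atTop (𝓝 (∫ ω, Xlim ω ^ 2 ∂μ)))
    (m : ℕ → ℕ) (hmtop : Tendsto m atTop atTop)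
    (Y : ℕ → ℕ → Ω → ℝ)
    (hYindep : ∀ n, iIndepFun
      (fun i : Fin (m n) => Y n i) μ)
    (hYdist : ∀ n i, i < m n → μ.map (Y n i) = μ.map (X n)) :
    ∀ ε > (0 : ℝ), Tendsto (fun n : ℕ =>
      μ {ω | ε * (∑ j ∈ Finset.range (m n), Y n j ω ^ 3) <
        (∑ j ∈ Finset.range (m n), ∑ k ∈ Finset.range j, Y n j ω ^ 2 * Y n k ω ^ 2)
          / (m n : ℝ)}) atTop (𝓝 0) := by
  intro ε hε
  have hY n i (hi : i < m n) : IdentDistrib (Y n i) (X n) μ μ :=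
    identDistrib_of_map_eq (hXmeas n).aemeasurable (hYdist n i hi)
  have hpair n : (range (m n) : Set ℕ).Pairwise fun i j => IndepFun (Y n i) (Y n j) μ :=
    fun i hi j hj hij => (hYindep n).indepFun (i := ⟨i, mem_range.1 hi⟩)
      (j := ⟨j, mem_range.1 hj⟩) (Fin.ne_of_val_ne hij)
  have hcube : Measurable fun t : ℝ => t ^ 3 := by fun_prop
  have hsparse (C : ℝ) :
      Tendsto (fun n => μ {ω | ∑ j ∈ range (m n), Y n j ω ^ 3 < C * m n}) atTop (𝓝 0) :=
    tendsto_measure_sum_lt_mul_of_lintegral_eq_top (X := fun n ω => X n ω ^ 3)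
      (fun n => ae_of_all _ fun ω => pow_nonneg (hXnonneg n ω) 3) (hXlimMeas.pow_const 3)
      (fun f => hconv (f.compContinuous ⟨(· ^ 3), continuous_pow 3⟩)) h3inf hmtop
      (fun n i hi j hj hij => (hpair n hi hj hij).comp hcube hcube)
      (fun n i hi => (hY n i hi).comp hcube) C
  refine tendsto_nhds_zero_of_forall_eventually_le_ofReal fun r hr => ?_
  set c := 2 * (∫ ω, Xlim ω ^ 2 ∂μ + 1) / r with hc_def
  have hc : 0 < c := by positivity
  filter_upwards [h2conv.eventually (eventually_le_nhds (lt_add_one _)),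
    hmtop.eventually_gt_atTop 0,
    (hsparse (c ^ 2 / ε)).eventually (eventually_le_nhds (ENNReal.ofReal_pos.2 (half_pos hr)))]
    with n h2n hmn hsn
  calc _ ≤ μ {ω | c * m n ≤ ∑ j ∈ range (m n), Y n j ω ^ 2}
        + μ {ω | ∑ j ∈ range (m n), Y n j ω ^ 3 < c ^ 2 / ε * m n} :=
        (measure_mono fun ω hω => mul_le_sum_sq_or_sum_cube_lt hε c hω).trans
          (measure_union_le _ _)
    _ ≤ ENNReal.ofReal (r / 2) + ENNReal.ofReal (r / 2) := by
        refine add_le_add ((measure_mul_le_sum_le hmn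
          (fun j hj => (hY n j hj).comp (by fun_prop : Measurable fun t : ℝ => t ^ 2))
          (ae_of_all _ fun ω => sq_nonneg _) (hn2int n) hc).trans
          (ENNReal.ofReal_le_ofReal ?_)) hsn
        rw [div_le_iff₀ hc]
        refine h2n.trans_eq ?_
        rw [hc_def]
        field_simp
    _ = ENNReal.ofReal r := by
        rw [← ENNReal.ofReal_add (half_pos hr).le (half_pos hr).le, add_halves]

theorem stmt11 {Ω : Type*} [MeasurableSpace Ω] (μ : Measure Ω) [IsProbabilityMeasure μ]
    (X : ℕ → Ω → ℝ) (Xlim : Ω → ℝ)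
    (hXmeas : ∀ n, Measurable (X n)) (hXlimMeas : Measurable Xlim)
    (hXnonneg : ∀ n ω, 0 ≤ X n ω) (hXlimNonneg : ∀ ω, 0 ≤ Xlim ω)
    (hconv : ∀ f : ℝ →ᵇ ℝ,
      Tendsto (fun n => ∫ ω, f (X n ω) ∂μ) atTop (𝓝 (∫ ω, f (Xlim ω) ∂μ)))
    (h2pos : 0 < ∫ ω, Xlim ω ^ 2 ∂μ)
    (h2int : Integrable (fun ω => Xlim ω ^ 2) μ)
    (h3inf : ∫⁻ ω, ENNReal.ofReal (Xlim ω ^ 3) ∂μ = ⊤)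
    (hn2int : ∀ n, Integrable (fun ω => X n ω ^ 2) μ)
    (h2conv : Tendsto (fun n => ∫ ω, X n ω ^ 2 ∂μ) atTop (𝓝 (∫ ω, Xlim ω ^ 2 ∂μ)))
    (m : ℕ → ℕ) (hmono : Monotone m) (hmtop : Tendsto m atTop atTop)
    (Y : ℕ → ℕ → Ω → ℝ)
    (hYindep : ∀ n, iIndepFun
      (fun i : Fin (m n) => Y n i) μ)
    (hYdist : ∀ n i, i < m n → μ.map (Y n i) = μ.map (X n)) :
    ∀ ε > (0 : ℝ), Tendsto (fun n : ℕ =>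
      μ {ω | ε * (∑ j ∈ Finset.range (m n), Y n j ω ^ 3) <
        (∑ j ∈ Finset.range (m n), ∑ k ∈ Finset.range j, Y n j ω ^ 2 * Y n k ω ^ 2)
          / (m n : ℝ)}) atTop (𝓝 0) :=
  stmt11_general μ X Xlim hXmeas hXlimMeas hXnonneg hconv h3inf hn2int h2conv m hmtop Y hYindep
    hYdist
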